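/- arXiv:2509.18709 — 3 statements merged into one kernel-verified Lean document; each statement's English description precedes it below -/
import Mathlib

section
/- Lower bound with switch budget, general demand: fix h = b = 1 and let D_S^{(1)} denote the class of all sequences D = (D_1,…,D_T) of T independent demands whose distributions are absolutely continuous (have densities) and supported in [0,4], and whose switch number is at most S. Then for all integers S ≥ 1 and T ≥ 17S, the minimax expected dynamic regret satisfies inf_{π ∈ Π} sup_{D ∈ D_S^{(1)}} E[R^π(T, D)] ≥ (e^{−16}/4)·√(S·T). -/
/-!
Under `twoBump p` (mass `p` uniform on `[0,1]`, `1 - p` uniform on `[3,4]`) with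
`p = (1 ± δ)/2`, every decision on the wrong side of `2` has regret at least `δ`. Cut the horizon
into `S` blocks of `n = T / S + 1` periods and give each block its own sign; switches then occur
only between blocks. If two sign patterns differ on one block, the Hellinger affinity of their
path laws is `(1 - δ²)^(k/2)` for a block of `k ≤ n` periods, which is at least `1/√2` once
`n δ² ≤ 1/2`; by Le Cam's inequality the errors of any test under the two patterns sum to at least
`1/4`, so the two expected regrets in a period sum to at least `δ/4`. Averaging over all sign
patterns yields one with regret at least `T δ / 8 = √(S T) / 16` for `δ = √(S / (4T))`.
-/

open MeasureTheory Finset ProbabilityTheory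
open scoped Classical ENNReal

noncomputable section

def hellingerAffinity {β : Type*} [MeasurableSpace β] (ν : Measure β) (f g : β → ℝ≥0∞) : ℝ≥0∞ :=
  ∫⁻ x, f x ^ (2⁻¹ : ℝ) * g x ^ (2⁻¹ : ℝ) ∂ν

section LeCam

variable {β : Type*} [MeasurableSpace β] {ν : Measure β} {f g : β → ℝ≥0∞}

theorem hellingerAffinity_le_mul (hf : Measurable f) (hg : Measurable g) :
    hellingerAffinity ν f g ≤ (∫⁻ x, f x ∂ν) ^ (2⁻¹ : ℝ) * (∫⁻ x, g x ∂ν) ^ (2⁻¹ : ℝ) := by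
  have h := ENNReal.lintegral_mul_le_Lp_mul_Lq ν Real.HolderConjugate.two_two
    (hf.pow_const (2⁻¹ : ℝ)).aemeasurable (hg.pow_const (2⁻¹ : ℝ)).aemeasurable
  simp_rw [← ENNReal.rpow_mul, show (2⁻¹ : ℝ) * 2 = 1 by norm_num, ENNReal.rpow_one,
    one_div] at h
  exact h

/-- Le Cam's two-point inequality. -/
theorem sq_hellingerAffinity_le (hf : Measurable f) (hg : Measurable g)
    [IsProbabilityMeasure (ν.withDensity f)] [IsProbabilityMeasure (ν.withDensity g)]
    {A : Set β} (hA : MeasurableSet A) :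
    hellingerAffinity ν f g ^ 2 ≤ 2 * (ν.withDensity f Aᶜ + ν.withDensity g A) := by
  have hsplit : hellingerAffinity ν f g
      = hellingerAffinity (ν.restrict A) f g + hellingerAffinity (ν.restrict Aᶜ) f g :=
    (lintegral_add_compl _ hA).symm
  have hA' : hellingerAffinity (ν.restrict A) f g ≤ ν.withDensity g A ^ (2⁻¹ : ℝ) := by
    refine (hellingerAffinity_le_mul hf hg).trans ?_
    rw [← withDensity_apply _ hA, ← withDensity_apply _ hA]
    exact mul_le_of_le_one_left' (ENNReal.rpow_le_one prob_le_one (by norm_num))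
  have hAc : hellingerAffinity (ν.restrict Aᶜ) f g ≤ ν.withDensity f Aᶜ ^ (2⁻¹ : ℝ) := by
    refine (hellingerAffinity_le_mul hf hg).trans ?_
    rw [← withDensity_apply _ hA.compl, ← withDensity_apply _ hA.compl]
    exact mul_le_of_le_one_right' (ENNReal.rpow_le_one prob_le_one (by norm_num))
  have hsq : ∀ x : ℝ≥0∞, (x ^ (2⁻¹ : ℝ)) ^ (2 : ℝ) = x := fun x => by
    rw [← ENNReal.rpow_mul]; norm_num
  calc hellingerAffinity ν f g ^ 2
      ≤ (ν.withDensity g A ^ (2⁻¹ : ℝ) + ν.withDensity f Aᶜ ^ (2⁻¹ : ℝ)) ^ (2 : ℝ) := by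
        rw [← ENNReal.rpow_natCast]
        exact ENNReal.rpow_le_rpow (hsplit ▸ add_le_add hA' hAc) (by norm_num)
    _ ≤ 2 * (ν.withDensity f Aᶜ + ν.withDensity g A) := by
        refine (ENNReal.rpow_add_le_mul_rpow_add_rpow _ _ (by norm_num)).trans_eq ?_
        rw [hsq, hsq, add_comm]; norm_num

end LeCam

section Pi

variable {ι : Type*} [Fintype ι] {α : ι → Type*} [∀ i, MeasurableSpace (α i)]
  (μ : ∀ i, Measure (α i)) [∀ i, IsProbabilityMeasure (μ i)]

theorem lintegral_pi_prod_eq_prod {f : ∀ i, α i → ℝ≥0∞} (hf : ∀ i, Measurable (f i)) :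
    ∫⁻ ω, ∏ i, f i (ω i) ∂Measure.pi μ = ∏ i, ∫⁻ x, f i x ∂μ i := by
  rw [lintegral_prod_eq_prod_lintegral_of_indepFun _ _ (iIndepFun_pi fun i => (hf i).aemeasurable)
    fun i => (hf i).comp (measurable_pi_apply i)]
  exact prod_congr rfl fun i _ => (measurePreserving_eval μ i).lintegral_comp (hf i)

theorem pi_withDensity {f : ∀ i, α i → ℝ≥0∞} (hf : ∀ i, Measurable (f i))
    [∀ i, SigmaFinite ((μ i).withDensity (f i))] :
    Measure.pi (fun i => (μ i).withDensity (f i))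
      = (Measure.pi μ).withDensity (fun ω => ∏ i, f i (ω i)) := by
  refine Measure.pi_eq fun s hs => ?_
  have hpi := MeasurableSet.univ_pi hs
  have hind : (Set.univ.pi s).indicator (fun ω => ∏ i, f i (ω i))
      = fun ω => ∏ i, (s i).indicator (f i) (ω i) := by
    ext ω
    by_cases hω : ω ∈ Set.univ.pi s
    · simp [Set.indicator_of_mem hω, Set.indicator_of_mem (Set.mem_univ_pi.1 hω _)]
    · obtain ⟨i, hi⟩ : ∃ i, ω i ∉ s i := by simpa [Set.mem_univ_pi] using hω
      rw [Set.indicator_of_notMem hω]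
      exact (prod_eq_zero (mem_univ i) (Set.indicator_of_notMem hi _)).symm
  rw [withDensity_apply _ hpi, ← lintegral_indicator hpi, hind,
    lintegral_pi_prod_eq_prod μ fun i => (hf i).indicator (hs i)]
  exact prod_congr rfl fun i _ => by rw [lintegral_indicator (hs i), withDensity_apply _ (hs i)]

theorem hellingerAffinity_pi {f g : ∀ i, α i → ℝ≥0∞} (hf : ∀ i, Measurable (f i))
    (hg : ∀ i, Measurable (g i)) :
    hellingerAffinity (Measure.pi μ) (fun ω => ∏ i, f i (ω i)) (fun ω => ∏ i, g i (ω i))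
      = ∏ i, hellingerAffinity (μ i) (f i) (g i) := by
  simp_rw [hellingerAffinity, ← ENNReal.prod_rpow_of_nonneg (by norm_num : (0 : ℝ) ≤ 2⁻¹),
    ← prod_mul_distrib]
  exact lintegral_pi_prod_eq_prod μ fun i => ((hf i).pow_const _).mul ((hg i).pow_const _)

end Pi

theorem setIntegral_Icc_sub {a b : ℝ} (hab : a ≤ b) (x : ℝ) :
    ∫ d in Set.Icc a b, (x - d) = (b - a) * (x - (a + b) / 2) := by
  rw [integral_Icc_eq_integral_Ioc, ← intervalIntegral.integral_of_le hab,
    intervalIntegral.integral_sub intervalIntegrable_const intervalIntegral.intervalIntegrable_id,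
    intervalIntegral.integral_const, integral_id, smul_eq_mul]
  ring

theorem mul_abs_sub_le_setIntegral_abs_sub {a b : ℝ} (hab : a ≤ b) (x : ℝ) :
    (b - a) * |x - (a + b) / 2| ≤ ∫ d in Set.Icc a b, |x - d| := by
  have h := abs_integral_le_integral_abs (μ := volume.restrict (Set.Icc a b)) (f := (x - ·))
  rwa [setIntegral_Icc_sub hab, abs_mul, abs_of_nonneg (sub_nonneg.2 hab)] at h

theorem setIntegral_abs_sub_of_notMem_Ioo {a b x : ℝ} (hab : a ≤ b) (hx : x ∉ Set.Ioo a b) :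
    ∫ d in Set.Icc a b, |x - d| = (b - a) * |x - (a + b) / 2| := by
  rcases le_or_gt b x with hbx | hxb
  · rw [setIntegral_congr_fun measurableSet_Icc (g := (x - ·))
      fun d hd => abs_of_nonneg (by linarith [hd.2]), setIntegral_Icc_sub hab,
      abs_of_nonneg (by linarith)]
  · have hxa : x ≤ a := not_lt.1 fun hax => hx ⟨hax, hxb⟩
    rw [setIntegral_congr_fun measurableSet_Icc (g := fun d => -(x - d))
      fun d hd => abs_of_nonpos (by linarith [hd.1]), integral_neg, setIntegral_Icc_sub hab,
      abs_of_nonpos (by linarith)]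
    ring

theorem exists_card_mul_le_sum_of_le_add_update {ι α : Type*} [Fintype ι] [DecidableEq ι]
    {s : Finset α} {F : (ι → Bool) → α → ℝ} {j : α → ι} {c : ℝ}
    (h : ∀ σ, ∀ t ∈ s, c ≤ F σ t + F (Function.update σ (j t) (!σ (j t))) t) :
    ∃ σ, #s * c / 2 ≤ ∑ t ∈ s, F σ t := by
  have hflip : ∀ t, ∑ σ, F (Function.update σ (j t) (!σ (j t))) t = ∑ σ, F σ t := fun t =>
    Function.Involutive.bijective (f := fun σ => Function.update σ (j t) (!σ (j t)))
      (fun σ => by simp) |>.sum_comp (F · t)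
  have hpair : ∀ t ∈ s, (Fintype.card (ι → Bool) : ℝ) * c / 2 ≤ ∑ σ, F σ t := fun t ht => by
    have := sum_le_sum fun σ (_ : σ ∈ univ) => h σ t ht
    rw [sum_add_distrib, hflip, sum_const, card_univ, nsmul_eq_mul] at this
    linarith
  have hsum : ∑ _σ : ι → Bool, (#s * c / 2) ≤ ∑ σ, ∑ t ∈ s, F σ t :=
    calc ∑ _σ : ι → Bool, (#s * c / 2)
        = ∑ _t ∈ s, (Fintype.card (ι → Bool) : ℝ) * c / 2 := by
          simp only [sum_const, card_univ, nsmul_eq_mul]; ring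
      _ ≤ ∑ t ∈ s, ∑ σ, F σ t := sum_le_sum hpair
      _ = ∑ σ, ∑ t ∈ s, F σ t := sum_comm
  obtain ⟨σ, -, hσ⟩ := exists_le_of_sum_le univ_nonempty hsum
  exact ⟨σ, hσ⟩

theorem card_filter_ne_sub_one_le {ι : Type*} [LinearOrder ι] [Fintype ι] {β : ℕ → ι}
    (hβ : Monotone β) (T : ℕ) : #{t ∈ Icc 2 T | β t ≠ β (t - 1)} ≤ Fintype.card ι := by
  refine (card_le_card_of_injOn β (fun _ _ => mem_coe.2 (mem_univ _))
    fun a ha b hb hab => ?_).trans_eq card_univ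
  simp only [coe_filter, mem_Icc, Set.mem_ofPred_eq] at ha hb
  by_contra hne
  rcases lt_or_gt_of_ne hne with h | h
  · exact hb.2 (le_antisymm (hab.symm.le.trans (hβ (by omega))) (hβ (by omega)))
  · exact ha.2 (le_antisymm (hab.le.trans (hβ (by omega))) (hβ (by omega)))

namespace Newsvendor

section Cost

variable (μ : Measure ℝ)

def cost (x : ℝ) : ℝ := ∫ d, |x - d| ∂μ

def optCost : ℝ := sInf (cost μ '' Set.Icc 0 4)

def regret (x : ℝ) : ℝ := cost μ x - optCost μ

variable {μ}

theorem cost_nonneg (x : ℝ) : 0 ≤ cost μ x := integral_nonneg fun _ => abs_nonneg _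

theorem measurable_cost [SFinite μ] : Measurable (cost μ) :=
  (StronglyMeasurable.integral_prod_right (f := fun x d : ℝ => |x - d|)
    (continuous_fst.sub continuous_snd).abs.stronglyMeasurable).measurable

theorem optCost_le_cost {x : ℝ} (hx : x ∈ Set.Icc 0 4) : optCost μ ≤ cost μ x :=
  csInf_le ⟨0, by rintro _ ⟨y, -, rfl⟩; exact cost_nonneg y⟩ ⟨x, hx, rfl⟩

theorem optCost_nonneg : 0 ≤ optCost μ :=
  le_csInf ⟨_, 0, by norm_num, rfl⟩ (by rintro _ ⟨y, -, rfl⟩; exact cost_nonneg y)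

theorem regret_nonneg {x : ℝ} (hx : x ∈ Set.Icc 0 4) : 0 ≤ regret μ x :=
  sub_nonneg.2 (optCost_le_cost hx)

theorem cost_le_four [IsProbabilityMeasure μ] (hμ : ∀ᵐ d ∂μ, d ∈ Set.Icc (0 : ℝ) 4) {x : ℝ}
    (hx : x ∈ Set.Icc 0 4) : cost μ x ≤ 4 := by
  have h := norm_integral_le_of_norm_le_const (C := 4) (f := fun d => |x - d|) (μ := μ) <| by
    filter_upwards [hμ] with d hd
    rw [Real.norm_eq_abs, abs_abs, abs_le]
    constructor <;> linarith [hx.1, hx.2, hd.1, hd.2]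
  simp only [probReal_univ, mul_one] at h
  exact (le_abs_self _).trans h

theorem integrable_regret_comp [IsProbabilityMeasure μ] (hμ : ∀ᵐ d ∂μ, d ∈ Set.Icc (0 : ℝ) 4)
    {Ω : Type*} [MeasurableSpace Ω] {P : Measure Ω} [IsFiniteMeasure P] {X : Ω → ℝ}
    (hX : Measurable X) (hX4 : ∀ ω, X ω ∈ Set.Icc 0 4) :
    Integrable (fun ω => regret μ (X ω)) P := by
  refine Integrable.of_bound ((measurable_cost.comp hX).sub_const _).aestronglyMeasurable 4
    (ae_of_all _ fun ω => ?_)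
  rw [Real.norm_eq_abs, abs_le]
  have := cost_le_four hμ (hX4 ω)
  have := optCost_le_cost (μ := μ) (hX4 ω)
  have := cost_nonneg (μ := μ) (X ω)
  have := optCost_nonneg (μ := μ)
  constructor <;> unfold regret <;> linarith

theorem mul_measureReal_le_integral_regret [IsProbabilityMeasure μ]
    (hμ : ∀ᵐ d ∂μ, d ∈ Set.Icc (0 : ℝ) 4) {Ω : Type*} [MeasurableSpace Ω] {P : Measure Ω}
    [IsFiniteMeasure P] {X : Ω → ℝ} (hX : Measurable X) (hX4 : ∀ ω, X ω ∈ Set.Icc 0 4)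
    {s : Set ℝ} {δ : ℝ} (hδ : 0 ≤ δ) (hs : ∀ x ∈ s, δ ≤ regret μ x) :
    δ * P.real (X ⁻¹' s) ≤ ∫ ω, regret μ (X ω) ∂P :=
  (mul_le_mul_of_nonneg_left (measureReal_mono (s₂ := {ω | δ ≤ regret μ (X ω)})
    fun _ hω => hs _ hω) hδ).trans
    (mul_meas_ge_le_integral_of_nonneg (ae_of_all _ fun ω => regret_nonneg (hX4 ω))
      (integrable_regret_comp hμ hX hX4) δ)

end Cost

section TwoBump

def twoBump (p : ℝ) : Measure ℝ :=
  ENNReal.ofReal p • volume.restrict (Set.Icc 0 1)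
    + ENNReal.ofReal (1 - p) • volume.restrict (Set.Icc 3 4)

variable {p : ℝ}

theorem isProbabilityMeasure_twoBump (hp : p ∈ Set.Icc 0 1) :
    IsProbabilityMeasure (twoBump p) := by
  constructor
  simp only [twoBump, Measure.add_apply, Measure.smul_apply, Measure.restrict_apply_univ,
    Real.volume_Icc, smul_eq_mul]
  norm_num
  rw [← ENNReal.ofReal_add hp.1 (sub_nonneg.2 hp.2)]
  norm_num

theorem twoBump_absolutelyContinuous_restrict (p : ℝ) : twoBump p ≪ volume.restrict (Set.Icc 0 4) :=
  have hmono : ∀ {a b : ℝ}, 0 ≤ a → b ≤ 4 →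
      volume.restrict (Set.Icc a b) ≪ volume.restrict (Set.Icc 0 4) := fun ha hb =>
    Measure.absolutelyContinuous_of_le (Measure.restrict_mono (Set.Icc_subset_Icc ha hb) le_rfl)
  ((hmono le_rfl (by norm_num)).smul_left _).add_left ((hmono (by norm_num) le_rfl).smul_left _)

theorem twoBump_absolutelyContinuous (p : ℝ) : twoBump p ≪ volume :=
  (twoBump_absolutelyContinuous_restrict p).trans
    (Measure.absolutelyContinuous_of_le Measure.restrict_le_self)

theorem ae_mem_Icc_twoBump (p : ℝ) : ∀ᵐ d ∂twoBump p, d ∈ Set.Icc (0 : ℝ) 4 :=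
  (twoBump_absolutelyContinuous_restrict p).ae_le (ae_restrict_mem measurableSet_Icc)

theorem twoBump_Icc_zero_four (hp : p ∈ Set.Icc 0 1) : twoBump p (Set.Icc 0 4) = 1 :=
  have := isProbabilityMeasure_twoBump hp
  ((ae_iff_measure_eq measurableSet_Icc.nullMeasurableSet).1 (ae_mem_Icc_twoBump p)).trans
    measure_univ

theorem integral_twoBump (hp : p ∈ Set.Icc 0 1) {h : ℝ → ℝ}
    (h₁ : IntegrableOn h (Set.Icc 0 1)) (h₂ : IntegrableOn h (Set.Icc 3 4)) :
    ∫ d, h d ∂twoBump p = p * (∫ d in Set.Icc 0 1, h d) + (1 - p) * ∫ d in Set.Icc 3 4, h d := by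
  rw [twoBump, integral_add_measure (h₁.smul_measure ENNReal.ofReal_ne_top)
    (h₂.smul_measure ENNReal.ofReal_ne_top), integral_smul_measure, integral_smul_measure,
    ENNReal.toReal_ofReal hp.1, ENNReal.toReal_ofReal (sub_nonneg.2 hp.2), smul_eq_mul, smul_eq_mul]

theorem cost_twoBump (hp : p ∈ Set.Icc 0 1) (x : ℝ) :
    cost (twoBump p) x
      = p * (∫ d in Set.Icc 0 1, |x - d|) + (1 - p) * ∫ d in Set.Icc 3 4, |x - d| :=
  have hc : Continuous fun d : ℝ => |x - d| := (continuous_const.sub continuous_id).abs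
  integral_twoBump hp hc.integrableOn_Icc hc.integrableOn_Icc

theorem le_cost_twoBump (hp : p ∈ Set.Icc 0 1) (x : ℝ) :
    p * |x - 1 / 2| + (1 - p) * |x - 7 / 2| ≤ cost (twoBump p) x := by
  have h₁ := mul_abs_sub_le_setIntegral_abs_sub zero_le_one x
  have h₂ := mul_abs_sub_le_setIntegral_abs_sub (by norm_num : (3 : ℝ) ≤ 4) x
  norm_num at h₁ h₂
  rw [cost_twoBump hp]
  obtain ⟨hp₀, hp₁⟩ := hp
  gcongr

theorem cost_twoBump_of_mem_Icc (hp : p ∈ Set.Icc 0 1) {x : ℝ} (hx : x ∈ Set.Icc 1 3) :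
    cost (twoBump p) x = p * |x - 1 / 2| + (1 - p) * |x - 7 / 2| := by
  rw [cost_twoBump hp,
    setIntegral_abs_sub_of_notMem_Ioo zero_le_one fun h => by linarith [h.2, hx.1],
    setIntegral_abs_sub_of_notMem_Ioo (by norm_num) fun h => by linarith [h.1, hx.2]]
  norm_num

theorem sub_mul_sub_le_regret_twoBump (hp : p ∈ Set.Icc 0 1) {y : ℝ} (hy : y ∈ Set.Icc 1 3)
    (x : ℝ) : (2 * p - 1) * (x - y) ≤ regret (twoBump p) x := by
  have hopt := optCost_le_cost (μ := twoBump p) ⟨by linarith [hy.1], by linarith [hy.2]⟩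
  rw [cost_twoBump_of_mem_Icc hp hy, abs_of_nonneg (by linarith [hy.1] : 0 ≤ y - 1 / 2),
    abs_of_nonpos (by linarith [hy.2] : y - 7 / 2 ≤ 0)] at hopt
  have hx := le_cost_twoBump hp x
  have a₁ := mul_le_mul_of_nonneg_left (le_abs_self (x - 1 / 2)) hp.1
  have a₂ := mul_le_mul_of_nonneg_left (neg_abs_le (x - 7 / 2)) (sub_nonneg.2 hp.2)
  unfold regret
  nlinarith

theorem lintegral_twoBump_ite (c₁ c₂ : ℝ≥0∞) :
    ∫⁻ d, (if d ≤ 2 then c₁ else c₂) ∂twoBump p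
      = ENNReal.ofReal p * c₁ + ENNReal.ofReal (1 - p) * c₂ := by
  rw [twoBump, lintegral_add_measure, lintegral_smul_measure, lintegral_smul_measure,
    setLIntegral_congr_fun measurableSet_Icc (g := fun _ => c₁)
      fun d hd => if_pos (by linarith [hd.2]),
    setLIntegral_congr_fun measurableSet_Icc (g := fun _ => c₂)
      fun d hd => if_neg (by linarith [hd.1]),
    setLIntegral_const, setLIntegral_const, Real.volume_Icc, Real.volume_Icc]
  norm_num

def twoBumpDensity (p d : ℝ) : ℝ≥0∞ :=
  if d ≤ 2 then ENNReal.ofReal (2 * p) else ENNReal.ofReal (2 * (1 - p))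

theorem measurable_twoBumpDensity (p : ℝ) : Measurable (twoBumpDensity p) :=
  Measurable.ite measurableSet_Iic measurable_const measurable_const

theorem twoBump_eq_withDensity :
    twoBump p = (twoBump 2⁻¹).withDensity (twoBumpDensity p) := by
  have h₁ : (volume.restrict (Set.Icc (0 : ℝ) 1)).withDensity (twoBumpDensity p)
      = ENNReal.ofReal (2 * p) • volume.restrict (Set.Icc 0 1) := by
    rw [← withDensity_const]
    exact withDensity_congr_ae
      (ae_restrict_of_forall_mem measurableSet_Icc fun d hd => if_pos (by linarith [hd.2]))
  have h₂ : (volume.restrict (Set.Icc (3 : ℝ) 4)).withDensity (twoBumpDensity p)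
      = ENNReal.ofReal (2 * (1 - p)) • volume.restrict (Set.Icc 3 4) := by
    rw [← withDensity_const]
    exact withDensity_congr_ae
      (ae_restrict_of_forall_mem measurableSet_Icc fun d hd => if_neg (by linarith [hd.1]))
  rw [twoBump, twoBump, withDensity_add_measure, withDensity_smul_measure,
    withDensity_smul_measure, h₁, h₂, smul_smul, smul_smul,
    ← ENNReal.ofReal_mul (by norm_num), ← ENNReal.ofReal_mul (by norm_num)]
  congr 3 <;> ring

theorem hellingerAffinity_twoBumpDensity {q : ℝ} (hp : p ∈ Set.Icc 0 1) (hq : q ∈ Set.Icc 0 1) :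
    hellingerAffinity (twoBump 2⁻¹) (twoBumpDensity p) (twoBumpDensity q)
      = ENNReal.ofReal (√p * √q + √(1 - p) * √(1 - q)) := by
  have hroot : ∀ a b : ℝ, 0 ≤ a → 0 ≤ b →
      ENNReal.ofReal (2 * a) ^ (2⁻¹ : ℝ) * ENNReal.ofReal (2 * b) ^ (2⁻¹ : ℝ)
        = ENNReal.ofReal (2 * (√a * √b)) := fun a b ha hb => by
    rw [ENNReal.ofReal_rpow_of_nonneg (by positivity) (by norm_num),
      ENNReal.ofReal_rpow_of_nonneg (by positivity) (by norm_num),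
      ← ENNReal.ofReal_mul (by positivity), ← Real.mul_rpow (by positivity) (by positivity),
      inv_eq_one_div, ← Real.sqrt_eq_rpow,
      show 2 * a * (2 * b) = (2 * (√a * √b)) ^ 2 by
        rw [mul_pow, mul_pow, Real.sq_sqrt ha, Real.sq_sqrt hb]; ring,
      Real.sqrt_sq (by positivity)]
  have hpt : ∀ d, twoBumpDensity p d ^ (2⁻¹ : ℝ) * twoBumpDensity q d ^ (2⁻¹ : ℝ)
      = if d ≤ 2 then ENNReal.ofReal (2 * (√p * √q))
        else ENNReal.ofReal (2 * (√(1 - p) * √(1 - q))) := fun d => by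
    unfold twoBumpDensity
    split_ifs
    · exact hroot p q hp.1 hq.1
    · exact hroot _ _ (sub_nonneg.2 hp.2) (sub_nonneg.2 hq.2)
  simp_rw [hellingerAffinity, hpt]
  rw [lintegral_twoBump_ite, ← ENNReal.ofReal_mul (by norm_num),
    ← ENNReal.ofReal_mul (by norm_num), ← ENNReal.ofReal_add (by positivity) (by positivity)]
  norm_num
  ring_nf

end TwoBump

section HardInstance

variable {δ : ℝ}

def bias (δ : ℝ) (b : Bool) : ℝ := if b then (1 + δ) / 2 else (1 - δ) / 2

theorem bias_mem_Icc (hδ₀ : 0 ≤ δ) (hδ₁ : δ ≤ 1) (b : Bool) : bias δ b ∈ Set.Icc 0 1 := by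
  cases b <;> simp only [bias, Bool.false_eq_true, if_true, if_false, Set.mem_Icc] <;>
    constructor <;> linarith

theorem hellingerAffinity_bias (hδ₀ : 0 ≤ δ) (hδ₁ : δ ≤ 1) (b b' : Bool) :
    hellingerAffinity (twoBump 2⁻¹) (twoBumpDensity (bias δ b)) (twoBumpDensity (bias δ b'))
      = if b = b' then 1 else ENNReal.ofReal √(1 - δ ^ 2) := by
  have hcompl : ∀ b, 1 - bias δ b = bias δ (!b) := by
    intro b; cases b <;> simp only [bias, Bool.not_true, Bool.not_false, Bool.false_eq_true,
      if_true, if_false] <;> ring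
  have hself : ∀ b, √(bias δ b) * √(bias δ b) + √(bias δ (!b)) * √(bias δ (!b)) = 1 := by
    intro b
    rw [Real.mul_self_sqrt (bias_mem_Icc hδ₀ hδ₁ _).1,
      Real.mul_self_sqrt (bias_mem_Icc hδ₀ hδ₁ _).1, ← hcompl]
    ring
  have hcross : √(bias δ true) * √(bias δ false) = √(1 - δ ^ 2) / 2 := by
    have h : 0 ≤ 1 - δ ^ 2 := by nlinarith
    rw [← Real.sqrt_mul (bias_mem_Icc hδ₀ hδ₁ _).1,
      show bias δ true * bias δ false = (√(1 - δ ^ 2) / 2) ^ 2 by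
        rw [div_pow, Real.sq_sqrt h]; simp only [bias, Bool.false_eq_true, if_true, if_false]; ring,
      Real.sqrt_sq (by positivity)]
  rw [hellingerAffinity_twoBumpDensity (bias_mem_Icc hδ₀ hδ₁ b) (bias_mem_Icc hδ₀ hδ₁ b'),
    hcompl, hcompl]
  by_cases h : b = b'
  · subst h
    rw [if_pos rfl, hself, ENNReal.ofReal_one]
  · obtain rfl : b' = !b := by cases b <;> cases b' <;> simp_all
    rw [if_neg h, Bool.not_not]
    congr 1
    cases b <;> simp only [Bool.not_true, Bool.not_false] <;> linarith [hcross]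

def wrongSide : Bool → Set ℝ
  | true => Set.Ici 2
  | false => Set.Iio 2

theorem le_regret_of_mem_wrongSide (hδ₀ : 0 ≤ δ) (hδ₁ : δ ≤ 1) {b : Bool} {x : ℝ}
    (hx : x ∈ wrongSide b) : δ ≤ regret (twoBump (bias δ b)) x := by
  cases b
  · have h := sub_mul_sub_le_regret_twoBump (bias_mem_Icc hδ₀ hδ₁ false) ⟨by norm_num, le_rfl⟩ x
    simp only [bias, wrongSide, Bool.false_eq_true, if_false, Set.mem_Iio] at h hx ⊢
    nlinarith
  · have h := sub_mul_sub_le_regret_twoBump (bias_mem_Icc hδ₀ hδ₁ true) ⟨le_rfl, by norm_num⟩ x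
    simp only [bias, wrongSide, if_true, Set.mem_Ici] at h hx ⊢
    nlinarith

variable {ι : Type*}

def pathLaw (δ : ℝ) (β : ℕ → ι) (T : ℕ) (σ : ι → Bool) : Measure (Fin T → ℝ) :=
  Measure.pi fun i : Fin T => twoBump (bias δ (σ (β (i + 1))))

theorem isProbabilityMeasure_pathLaw (hδ₀ : 0 ≤ δ) (hδ₁ : δ ≤ 1) (β : ℕ → ι) (T : ℕ)
    (σ : ι → Bool) : IsProbabilityMeasure (pathLaw δ β T σ) :=
  have := fun i : Fin T => isProbabilityMeasure_twoBump (bias_mem_Icc hδ₀ hδ₁ (σ (β (i + 1))))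
  Measure.pi.instIsProbabilityMeasure _

theorem pathLaw_eq_withDensity (hδ₀ : 0 ≤ δ) (hδ₁ : δ ≤ 1) (β : ℕ → ι) (T : ℕ)
    (σ : ι → Bool) :
    pathLaw δ β T σ = (Measure.pi fun _ : Fin T => twoBump 2⁻¹).withDensity
      fun ω => ∏ i : Fin T, twoBumpDensity (bias δ (σ (β (i + 1)))) (ω i) := by
  have := isProbabilityMeasure_twoBump (p := 2⁻¹) ⟨by norm_num, by norm_num⟩
  have hsf : ∀ i : Fin T, SigmaFinite ((twoBump 2⁻¹).withDensity
      (twoBumpDensity (bias δ (σ (β (i + 1)))))) := fun i => by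
    rw [← twoBump_eq_withDensity]
    have := isProbabilityMeasure_twoBump (bias_mem_Icc hδ₀ hδ₁ (σ (β (i + 1))))
    infer_instance
  rw [← pi_withDensity _ fun i => measurable_twoBumpDensity _]
  exact congrArg Measure.pi (funext fun i => twoBump_eq_withDensity)

theorem half_le_one_sub_sq_pow {n : ℕ} (hδ₀ : 0 ≤ δ) (hδ₁ : δ ≤ 1) (hn : n * δ ^ 2 ≤ 1 / 2) :
    1 / 2 ≤ (1 - δ ^ 2) ^ n := by
  have := one_add_mul_le_pow (a := -δ ^ 2) (by nlinarith) n
  rw [← sub_eq_add_neg] at this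
  linarith

theorem quarter_le_pathLaw_compl_add [DecidableEq ι] (hδ₀ : 0 ≤ δ) (hδ₁ : δ ≤ 1) {n T : ℕ}
    (hn : n * δ ^ 2 ≤ 1 / 2) {β : ℕ → ι} {j : ι} (hβ : #{i : Fin T | β (i + 1) = j} ≤ n)
    {σ σ' : ι → Bool} (hσ : ∀ k, k ≠ j → σ k = σ' k) {A : Set (Fin T → ℝ)}
    (hA : MeasurableSet A) :
    1 / 4 ≤ (pathLaw δ β T σ).real Aᶜ + (pathLaw δ β T σ').real A := by
  have := isProbabilityMeasure_twoBump (p := 2⁻¹) ⟨by norm_num, by norm_num⟩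
  have hP := isProbabilityMeasure_pathLaw hδ₀ hδ₁ β T σ
  have hP' := isProbabilityMeasure_pathLaw hδ₀ hδ₁ β T σ'
  have hmeas : ∀ τ : ι → Bool, Measurable fun ω : Fin T → ℝ =>
      ∏ i : Fin T, twoBumpDensity (bias δ (τ (β (i + 1)))) (ω i) := fun τ =>
    Finset.measurable_prod _ fun i _ => (measurable_twoBumpDensity _).comp (measurable_pi_apply i)
  set c := ENNReal.ofReal √(1 - δ ^ 2)
  have hc : c ≤ 1 := ENNReal.ofReal_le_one.2 (Real.sqrt_le_one.2 (by nlinarith))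
  have haff : c ^ n ≤ hellingerAffinity (Measure.pi fun _ : Fin T => twoBump 2⁻¹)
      (fun ω => ∏ i : Fin T, twoBumpDensity (bias δ (σ (β (i + 1)))) (ω i))
      (fun ω => ∏ i : Fin T, twoBumpDensity (bias δ (σ' (β (i + 1)))) (ω i)) := by
    rw [hellingerAffinity_pi _ (fun _ => measurable_twoBumpDensity _)
      (fun _ => measurable_twoBumpDensity _)]
    calc c ^ n ≤ c ^ #{i : Fin T | β (i + 1) = j} := pow_le_pow_of_le_one (by positivity) hc hβ
      _ = ∏ i : Fin T, if β (i + 1) = j then c else 1 := by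
        rw [prod_ite, prod_const, prod_const_one, mul_one]
      _ ≤ _ := prod_le_prod' fun i _ => by
        rw [hellingerAffinity_bias hδ₀ hδ₁]
        split_ifs with hi heq heq
        · exact hc
        · exact le_rfl
        · exact le_rfl
        · exact absurd (hσ _ hi) heq
  have hhalf : (2⁻¹ : ℝ≥0∞) ≤ (c ^ n) ^ 2 := by
    rw [← ENNReal.ofReal_pow (Real.sqrt_nonneg _), ← ENNReal.ofReal_pow (by positivity),
      ← pow_mul, mul_comm, pow_mul, Real.sq_sqrt (by nlinarith),
      ← ENNReal.ofReal_ofNat 2, ← ENNReal.ofReal_inv_of_pos two_pos]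
    exact ENNReal.ofReal_le_ofReal (by linarith [half_le_one_sub_sq_pow hδ₀ hδ₁ hn])
  rw [pathLaw_eq_withDensity hδ₀ hδ₁ β T σ, pathLaw_eq_withDensity hδ₀ hδ₁ β T σ'] at *
  have key := (hhalf.trans (pow_le_pow_left' haff 2)).trans
    (sq_hellingerAffinity_le (hmeas σ) (hmeas σ') hA)
  have hreal := ENNReal.toReal_mono (by finiteness) key
  rw [ENNReal.toReal_mul, ENNReal.toReal_add (by finiteness) (by finiteness), ENNReal.toReal_inv,
    ENNReal.toReal_ofNat] at hreal
  simp only [measureReal_def]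
  linarith

def periodRegret (δ : ℝ) (β : ℕ → ι) (T : ℕ) (π : ℕ → (Fin T → ℝ) → ℝ) (σ : ι → Bool)
    (t : ℕ) : ℝ :=
  ∫ ω, regret (twoBump (bias δ (σ (β t)))) (π t ω) ∂pathLaw δ β T σ

theorem mul_measureReal_wrongSide_le_periodRegret (hδ₀ : 0 ≤ δ) (hδ₁ : δ ≤ 1) {β : ℕ → ι}
    {T : ℕ} {π : ℕ → (Fin T → ℝ) → ℝ} {t : ℕ} (hπ : Measurable (π t))
    (hπ4 : ∀ ω, π t ω ∈ Set.Icc 0 4) (σ : ι → Bool) :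
    δ * (pathLaw δ β T σ).real (π t ⁻¹' wrongSide (σ (β t))) ≤ periodRegret δ β T π σ t :=
  have := isProbabilityMeasure_twoBump (bias_mem_Icc hδ₀ hδ₁ (σ (β t)))
  have := isProbabilityMeasure_pathLaw hδ₀ hδ₁ β T σ
  mul_measureReal_le_integral_regret (ae_mem_Icc_twoBump _) hπ hπ4 hδ₀
    fun _ hx => le_regret_of_mem_wrongSide hδ₀ hδ₁ hx

theorem quarter_le_periodRegret_add_update [DecidableEq ι] (hδ₀ : 0 ≤ δ) (hδ₁ : δ ≤ 1)
    {n T : ℕ} (hn : n * δ ^ 2 ≤ 1 / 2) {β : ℕ → ι}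
    (hβ : ∀ j, #{i : Fin T | β (i + 1) = j} ≤ n) {π : ℕ → (Fin T → ℝ) → ℝ} {t : ℕ}
    (hπ : Measurable (π t)) (hπ4 : ∀ ω, π t ω ∈ Set.Icc 0 4) (σ : ι → Bool) :
    δ / 4 ≤ periodRegret δ β T π σ t
      + periodRegret δ β T π (Function.update σ (β t) (!σ (β t))) t := by
  set σ' := Function.update σ (β t) (!σ (β t))
  have hagree : ∀ k, k ≠ β t → σ k = σ' k := fun k hk => (Function.update_of_ne hk _ _).symm
  have hA : MeasurableSet (π t ⁻¹' Set.Ici 2) := hπ measurableSet_Ici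
  have h₁ := mul_measureReal_wrongSide_le_periodRegret hδ₀ hδ₁ (β := β) hπ hπ4 σ
  have h₂ := mul_measureReal_wrongSide_le_periodRegret hδ₀ hδ₁ (β := β) hπ hπ4 σ'
  rw [show σ' (β t) = !σ (β t) from Function.update_self _ _ _] at h₂
  have hcompl : π t ⁻¹' Set.Iio 2 = (π t ⁻¹' Set.Ici 2)ᶜ := by
    rw [← Set.preimage_compl, Set.compl_Ici]
  cases hb : σ (β t) <;> simp only [hb, wrongSide, Bool.not_false, Bool.not_true, hcompl] at h₁ h₂
  · have := quarter_le_pathLaw_compl_add hδ₀ hδ₁ hn (hβ (β t)) hagree hA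
    nlinarith
  · have := quarter_le_pathLaw_compl_add hδ₀ hδ₁ hn (hβ (β t)) (fun k hk => (hagree k hk).symm) hA
    nlinarith

theorem exists_le_integral_sum_regret [Fintype ι] [DecidableEq ι] (hδ₀ : 0 ≤ δ) (hδ₁ : δ ≤ 1)
    {n T : ℕ} (hn : n * δ ^ 2 ≤ 1 / 2) {β : ℕ → ι}
    (hβ : ∀ j, #{i : Fin T | β (i + 1) = j} ≤ n) {π : ℕ → (Fin T → ℝ) → ℝ}
    (hπ : ∀ t, Measurable (π t)) (hπ4 : ∀ t ∈ Icc 1 T, ∀ ω, π t ω ∈ Set.Icc 0 4) :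
    ∃ σ : ι → Bool, T * δ / 8 ≤
      ∫ ω, ∑ t ∈ Icc 1 T, regret (twoBump (bias δ (σ (β t)))) (π t ω) ∂pathLaw δ β T σ := by
  obtain ⟨σ, hσ⟩ := exists_card_mul_le_sum_of_le_add_update fun σ t ht =>
    quarter_le_periodRegret_add_update hδ₀ hδ₁ hn hβ (hπ t) (hπ4 t ht) σ
  have := isProbabilityMeasure_pathLaw hδ₀ hδ₁ β T σ
  refine ⟨σ, ?_⟩
  rw [integral_finsetSum _ fun t ht => by
    have := isProbabilityMeasure_twoBump (bias_mem_Icc hδ₀ hδ₁ (σ (β t)))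
    exact integrable_regret_comp (ae_mem_Icc_twoBump _) (hπ t) (hπ4 t ht)]
  simp only [Nat.card_Icc, add_tsub_cancel_right] at hσ
  unfold periodRegret at hσ
  linarith

end HardInstance

theorem sqrt_div_four_mul_le_one {S T : ℕ} (hST : S ≤ T) : √((S : ℝ) / (4 * T)) ≤ 1 :=
  Real.sqrt_le_one.2 (div_le_one_of_le₀ (by norm_cast; omega) (by positivity))

section Blocks

/-- Period `t ≥ 1` lies in block `(t - 1) / n`; the `min` only moves periods beyond `S * n`. -/
def block (S n : ℕ) [NeZero S] (t : ℕ) : Fin S :=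
  ⟨min ((t - 1) / n) (S - 1), by have := NeZero.pos S; omega⟩

variable {S : ℕ} [NeZero S]

theorem monotone_block (n : ℕ) : Monotone (block S n) := fun _ _ hab =>
  Fin.mk_le_mk.2 (min_le_min_right _ (Nat.div_le_div_right (by omega)))

theorem card_block_eq_le {n T : ℕ} (hn : 0 < n) (hT : T ≤ S * n) (j : Fin S) :
    #{i : Fin T | block S n (i + 1) = j} ≤ n := by
  have hval : ∀ i : Fin T, (block S n (i + 1) : ℕ) = i / n := fun i => by
    have : (i : ℕ) / n < S := Nat.div_lt_of_lt_mul (by rw [mul_comm]; omega)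
    simp only [block, Nat.add_sub_cancel]
    omega
  refine (card_le_card_of_injOn (fun i : Fin T => (i : ℕ) % n)
    (fun i _ => mem_coe.2 (mem_range.2 (Nat.mod_lt _ hn))) fun a ha b hb hab => ?_).trans_eq
    (card_range n)
  simp only [coe_filter, mem_univ, true_and, Set.mem_ofPred_eq] at ha hb
  have ha' := hval a
  have hb' := hval b
  rw [ha] at ha'
  rw [hb] at hb'
  have := Nat.div_add_mod a n
  have := Nat.div_add_mod b n
  simp only at hab
  ext
  nlinarith

theorem exists_le_integral_sum_regret_block {T : ℕ} (hST : S ≤ T) {δ : ℝ} (hδ₀ : 0 ≤ δ)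
    (hδ : δ ^ 2 = S / (4 * T)) {π : ℕ → (Fin T → ℝ) → ℝ} (hπ : ∀ t, Measurable (π t))
    (hπ4 : ∀ t ∈ Icc 1 T, ∀ ω, π t ω ∈ Set.Icc 0 4) :
    ∃ σ : Fin S → Bool, √(S * T) / 16 ≤ ∫ ω, ∑ t ∈ Icc 1 T,
      regret (twoBump (bias δ (σ (block S (T / S + 1) t)))) (π t ω)
        ∂pathLaw δ (block S (T / S + 1)) T σ := by
  have hS₀ := NeZero.pos S
  have hT₀ : (0 : ℝ) < T := by exact_mod_cast (by omega : 0 < T)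
  have hδ₁ : δ ≤ 1 := by
    rw [← Real.sqrt_sq hδ₀, hδ]
    exact sqrt_div_four_mul_le_one hST
  have hn : ((T / S + 1 : ℕ) : ℝ) * δ ^ 2 ≤ 1 / 2 := by
    have : (T / S + 1) * S ≤ 2 * T := by
      have := Nat.div_mul_le_self T S
      rw [add_mul, one_mul]; omega
    rw [hδ, mul_div_assoc', div_le_div_iff₀ (by positivity) two_pos]
    exact_mod_cast (by omega : (T / S + 1) * S * 2 ≤ 1 * (4 * T))
  have hsqrt : √(S * T) = 2 * T * δ :=
    (Real.sqrt_eq_iff_mul_self_eq (by positivity) (by positivity)).2 (by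
      rw [show 2 * T * δ * (2 * T * δ) = 4 * T ^ 2 * δ ^ 2 by ring, hδ]
      field_simp)
  obtain ⟨σ, hσ⟩ := exists_le_integral_sum_regret hδ₀ hδ₁ hn
    (card_block_eq_le (Nat.succ_pos _) (Nat.lt_mul_div_succ T hS₀).le) hπ hπ4
  exact ⟨σ, by rw [hsqrt]; linarith⟩

end Blocks

end Newsvendor

open Newsvendor in
theorem stmt_4_general
    (T S : ℕ) (hS : 1 ≤ S) (hT : 17 * S ≤ T)
    (π : ℕ → (Fin T → ℝ) → ℝ)
    (hπmeas : ∀ t, Measurable (π t))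
    (hπrange : ∀ t ∈ Finset.Icc 1 T, ∀ d, π t d ∈ Set.Icc (0 : ℝ) 4) :
    ∃ μ : ℕ → ProbabilityMeasure ℝ,
      (∀ t ∈ Finset.Icc 1 T, (μ t : Measure ℝ) ≪ MeasureTheory.volume) ∧
      (∀ t ∈ Finset.Icc 1 T, (μ t : Measure ℝ) (Set.Icc (0 : ℝ) 4) = 1) ∧
      ((Finset.Icc 2 T).filter (fun t => μ t ≠ μ (t - 1))).card ≤ S ∧
      Real.exp (-16) / 4 * Real.sqrt ((S : ℝ) * T) ≤
        ∫ ω : Fin T → ℝ,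
          (∑ t ∈ Finset.Icc 1 T,
            ((∫ d, |π t ω - d| ∂(μ t : Measure ℝ)) -
              sInf ((fun x => ∫ d, |x - d| ∂(μ t : Measure ℝ)) '' Set.Icc (0 : ℝ) 4)))
          ∂(Measure.pi fun i : Fin T => ((μ ((i : ℕ) + 1) : Measure ℝ))) := by
  have : NeZero S := ⟨by omega⟩
  obtain ⟨σ, hσ⟩ := exists_le_integral_sum_regret_block (by omega) (Real.sqrt_nonneg _)
    (Real.sq_sqrt (by positivity : (0 : ℝ) ≤ S / (4 * T))) hπmeas hπrange
  have hbias := fun t => bias_mem_Icc (Real.sqrt_nonneg _)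
    (sqrt_div_four_mul_le_one (by omega : S ≤ T)) (σ (block S (T / S + 1) t))
  refine ⟨fun t => ⟨_, isProbabilityMeasure_twoBump (hbias t)⟩,
    fun t _ => twoBump_absolutelyContinuous _, fun t _ => twoBump_Icc_zero_four (hbias t), ?_, ?_⟩
  · have hβ := monotone_block (S := S) (T / S + 1)
    refine (card_le_card (monotone_filter_right _ (q := fun t => block _ _ t ≠ block _ _ (t - 1))
      fun t _ hμ hb => hμ ?_)).trans
        ((card_filter_ne_sub_one_le hβ T).trans_eq (Fintype.card_fin S))
    exact Subtype.ext (congrArg (fun k => twoBump (bias _ (σ k))) hb)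
  · have hexp : Real.exp (-16) ≤ 1 / 4 := by
      rw [Real.exp_neg, inv_le_comm₀ (Real.exp_pos _) (by norm_num)]
      linarith [Real.add_one_le_exp 16]
    calc Real.exp (-16) / 4 * √(S * T) ≤ 1 / 4 / 4 * √(S * T) := by gcongr
      _ = √(S * T) / 16 := by ring
      _ ≤ _ := hσ

/-- Theorem 3(1): minimax lower bound for the switch-number budget and general demand.
For `h = b = 1`, decisions in `[0,4]`, and any admissible policy `π` (each `π t` is a
measurable map of the history `D 1, …, D (t−1)` into `[0,4]`), there is an instance
`D ∈ 𝒟_S^{(1)}` — a sequence of `T` independent demands whose laws are absolutely continuous,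
supported in `[0,4]`, with switch number at most `S` — on which the expected dynamic regret
is at least `(e^{−16}/4)·√(S·T)`.  (Coordinate `i : Fin T` of the sample path carries the
demand of period `i+1`.) -/
theorem stmt_4
    (T S : ℕ) (hS : 1 ≤ S) (hT : 17 * S ≤ T)
    (π : ℕ → (Fin T → ℝ) → ℝ)
    (hπmeas : ∀ t, Measurable (π t))
    (hπhist : ∀ t, ∀ d d' : Fin T → ℝ,
      (∀ i : Fin T, (i : ℕ) + 1 < t → d i = d' i) → π t d = π t d')
    (hπrange : ∀ t ∈ Finset.Icc 1 T, ∀ d, π t d ∈ Set.Icc (0 : ℝ) 4) :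
    ∃ μ : ℕ → ProbabilityMeasure ℝ,
      (∀ t ∈ Finset.Icc 1 T, (μ t : Measure ℝ) ≪ MeasureTheory.volume) ∧
      (∀ t ∈ Finset.Icc 1 T, (μ t : Measure ℝ) (Set.Icc (0 : ℝ) 4) = 1) ∧
      ((Finset.Icc 2 T).filter (fun t => μ t ≠ μ (t - 1))).card ≤ S ∧
      Real.exp (-16) / 4 * Real.sqrt ((S : ℝ) * T) ≤
        ∫ ω : Fin T → ℝ,
          (∑ t ∈ Finset.Icc 1 T,
            ((∫ d, |π t ω - d| ∂(μ t : Measure ℝ)) -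
              sInf ((fun x => ∫ d, |x - d| ∂(μ t : Measure ℝ)) '' Set.Icc (0 : ℝ) 4)))
          ∂(Measure.pi fun i : Fin T => ((μ ((i : ℕ) + 1) : Measure ℝ))) :=
  stmt_4_general T S hS hT π hπmeas hπrange

end
end

section
/- Partition lemma: let μ_1,…,μ_T be probability distributions on ℝ and set V = Σ_{t=2}^T ‖μ_t − μ_{t−1}‖_TV. Then there exists a partition of {1,…,T} into K consecutive intervals I'_1, I'_2, …, I'_K such that, for every k ∈ {1,…,K}, the within-interval variation V_{I'_k} := Σ_{t ∈ I'_k, t > min I'_k} ‖μ_t − μ_{t−1}‖_TV satisfies V_{I'_k} ≤ √(1/|I'_k|), and moreover K ≤ 2·V^{2/3}·T^{1/3} + 1. -/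
open MeasureTheory Finset

noncomputable section

/-- Total-variation distance between two (probability) laws on `ℝ`. -/
def tvDist (μ ν : Measure ℝ) : ℝ :=
  ⨆ A : {A : Set ℝ // MeasurableSet A}, |(μ A.1).toReal - (ν A.1).toReal|

namespace Stmt16Aux
open scoped Classical

def stopP (d : ℕ → ℝ) (T a e : ℕ) : Prop :=
  T ≤ e ∨ Real.sqrt (1 / ((e : ℝ) + 1 - a)) < ∑ t ∈ Finset.Icc (a + 2) (e + 1), d t

lemma stop_ex (d : ℕ → ℝ) (T a : ℕ) : ∃ n, stopP d T a (a + 1 + n) :=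
  ⟨T - (a + 1), Or.inl (by omega)⟩

noncomputable def nxt (d : ℕ → ℝ) (T a : ℕ) : ℕ :=
  a + 1 + Nat.find (stop_ex d T a)

lemma lt_nxt (d : ℕ → ℝ) (T a : ℕ) : a < nxt d T a := by unfold nxt; omega

lemma nxt_le (d : ℕ → ℝ) {T a : ℕ} (h : a < T) : nxt d T a ≤ T := by
  have : Nat.find (stop_ex d T a) ≤ T - (a + 1) :=
    Nat.find_le (Or.inl (by omega))
  unfold nxt; omega

lemma nxt_cond (d : ℕ → ℝ) (T a : ℕ) :
    ∑ t ∈ Finset.Icc (a + 2) (nxt d T a), d t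
      ≤ Real.sqrt (1 / ((nxt d T a : ℝ) - a)) := by
  rcases Nat.eq_zero_or_pos (Nat.find (stop_ex d T a)) with h | h
  · have he : nxt d T a = a + 1 := by unfold nxt; omega
    rw [he, Finset.Icc_eq_empty (by omega), Finset.sum_empty]
    have h1 : ((a + 1 : ℕ) : ℝ) - a = 1 := by push_cast; ring
    rw [h1, div_one, Real.sqrt_one]
    norm_num
  · obtain ⟨n, hn⟩ : ∃ n, Nat.find (stop_ex d T a) = n + 1 :=
      ⟨_, (Nat.succ_pred_eq_of_pos h).symm⟩
    have hmin := Nat.find_min (stop_ex d T a) (show n < Nat.find (stop_ex d T a) by omega)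
    unfold stopP at hmin
    push_neg at hmin
    have he : nxt d T a = a + 1 + n + 1 := by unfold nxt; omega
    rw [he]
    refine le_trans (le_of_le_of_eq hmin.2 rfl) (le_of_eq ?_)
    congr 2
    push_cast; ring

lemma nxt_stop (d : ℕ → ℝ) {T a : ℕ} (h : nxt d T a < T) :
    Real.sqrt (1 / ((nxt d T a : ℝ) + 1 - a))
      < ∑ t ∈ Finset.Icc (a + 2) (nxt d T a + 1), d t := by
  have hs := Nat.find_spec (stop_ex d T a)
  rcases hs with hs | hs
  · exfalso; unfold nxt at h; omega
  · exact hs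

noncomputable def EP (d : ℕ → ℝ) (T : ℕ) : ℕ → ℕ
  | 0 => 0
  | k + 1 => if EP d T k < T then nxt d T (EP d T k) else EP d T k

lemma EP_le (d : ℕ → ℝ) (T : ℕ) : ∀ k, EP d T k ≤ T
  | 0 => Nat.zero_le T
  | k + 1 => by
    simp only [EP]
    split
    · exact nxt_le d (by assumption)
    · exact EP_le d T k

lemma EP_ge (d : ℕ → ℝ) (T : ℕ) : ∀ k, min k T ≤ EP d T k
  | 0 => by simp [EP]
  | k + 1 => by
    have ih := EP_ge d T k
    have hle := EP_le d T k
    simp only [EP]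
    split
    · have := lt_nxt d T (EP d T k)
      omega
    · omega

lemma EP_exists (d : ℕ → ℝ) (T : ℕ) : ∃ k, EP d T k = T := by
  refine ⟨T, le_antisymm (EP_le d T T) ?_⟩
  have := EP_ge d T T; omega

lemma EP_mono (d : ℕ → ℝ) (T : ℕ) : Monotone (EP d T) := by
  apply monotone_nat_of_le_succ
  intro k
  simp only [EP]
  split
  · exact (lt_nxt d T (EP d T k)).le
  · exact le_refl _

theorem partition (T : ℕ) (hT : 1 ≤ T) (d : ℕ → ℝ) (hd : ∀ t, 0 ≤ d t) :
    ∃ (K : ℕ) (e : ℕ → ℕ),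
      1 ≤ K ∧ e 0 = 0 ∧ e K = T ∧
      (∀ k < K, e k < e (k + 1)) ∧
      (∀ k, 1 ≤ k → k ≤ K →
        (∑ t ∈ Finset.Icc (e (k - 1) + 2) (e k), d t)
          ≤ Real.sqrt (1 / ((e k : ℝ) - e (k - 1)))) ∧
      (K : ℝ) ≤ 2 * (∑ t ∈ Finset.Icc 2 T, d t) ^ ((2 : ℝ) / 3) * (T : ℝ) ^ ((1 : ℝ) / 3) + 1 := by
  classical
  set V : ℝ := ∑ t ∈ Finset.Icc 2 T, d t with hVdef
  have hV0 : 0 ≤ V := Finset.sum_nonneg fun t _ => hd t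
  obtain hex := EP_exists d T
  set E : ℕ → ℕ := EP d T with hE
  set K : ℕ := Nat.find hex with hKdef
  have hEK : E K = T := Nat.find_spec hex
  have hE0 : E 0 = 0 := rfl
  have hK1 : 1 ≤ K := by
    by_contra h
    have : K = 0 := by omega
    rw [this] at hEK
    omega
  have hlt : ∀ k < K, E k < T := fun k hk =>
    lt_of_le_of_ne (EP_le d T k) (Nat.find_min hex hk)
  have hstep : ∀ k < K, E (k + 1) = nxt d T (E k) := by
    intro k hk
    show EP d T (k + 1) = _
    simp only [EP]
    rw [if_pos (hlt k hk)]
  have hmono : ∀ k < K, E k < E (k + 1) := by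
    intro k hk; rw [hstep k hk]; exact lt_nxt d T (E k)
  refine ⟨K, E, hK1, hE0, hEK, hmono, ?_, ?_⟩
  · intro k h1 hk
    have hk1 : k - 1 < K := by omega
    have heq : E k = nxt d T (E (k - 1)) := by
      have := hstep (k - 1) hk1
      rwa [show k - 1 + 1 = k by omega] at this
    rw [heq]
    exact nxt_cond d T (E (k - 1))
  · -- counting bound
    set m : ℕ := K - 1 with hm
    have hKm : K = m + 1 := by omega
    rcases Nat.eq_zero_or_pos m with hm0 | hm1
    · rw [hKm, hm0]
      have : (0:ℝ) ≤ 2 * V ^ ((2:ℝ)/3) * (T:ℝ) ^ ((1:ℝ)/3) := by positivity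
      push_cast
      linarith
    -- m ≥ 1
    have hmK : m < K := by omega
    have hmT : m < T := by
      have h1 : K ≤ T := by
        have : EP d T T = T := le_antisymm (EP_le d T T) (by have := EP_ge d T T; omega)
        exact Nat.find_le this
      omega
    set c : ℕ → ℝ := fun i => (E (i + 1) : ℝ) + 1 - E i with hc
    have hEi_mono : ∀ i < m, E i < E (i + 1) := fun i hi => hmono i (by omega)
    have hc2 : ∀ i < m, (2:ℝ) ≤ c i := by
      intro i hi
      have := hEi_mono i hi
      have hcast : (E i : ℝ) + 1 ≤ (E (i+1) : ℝ) := by exact_mod_cast this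
      simp only [hc]
      linarith
    have hcpos : ∀ i < m, (0:ℝ) < c i := fun i hi => lt_of_lt_of_le two_pos (hc2 i hi)
    set A : ℝ := ∑ i ∈ Finset.range m, Real.sqrt (1 / c i) with hA
    set B : ℝ := ∑ i ∈ Finset.range m, Real.sqrt (c i) with hB
    have hA0 : 0 ≤ A := Finset.sum_nonneg fun i _ => Real.sqrt_nonneg _
    have hB0 : 0 ≤ B := Finset.sum_nonneg fun i _ => Real.sqrt_nonneg _
    -- A ≤ V
    have hAV : A ≤ V := by
      set J : ℕ → Finset ℕ := fun i => Finset.Icc (E i + 2) (E (i + 1) + 1) with hJ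
      have hstep' : ∀ i < m, E (i + 1) = nxt d T (E i) := fun i hi => hstep i (by omega)
      have hEltT : ∀ i < m, E (i + 1) < T := fun i hi => hlt (i + 1) (by omega)
      have h1 : ∀ i ∈ Finset.range m, Real.sqrt (1 / c i) ≤ ∑ t ∈ J i, d t := by
        intro i hi
        have hi' := Finset.mem_range.mp hi
        have hnt : nxt d T (E i) < T := by rw [← hstep' i hi']; exact hEltT i hi'
        have hsp := nxt_stop d hnt
        rw [← hstep' i hi'] at hsp
        exact le_of_lt hsp
      have h2 : A ≤ ∑ i ∈ Finset.range m, ∑ t ∈ J i, d t := Finset.sum_le_sum h1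
      have key : ∀ {i j : ℕ}, i < j → j < m → Disjoint (J i) (J j) := by
        intro i j hij hjm
        rw [Finset.disjoint_left]
        intro t hti htj
        rw [hJ] at hti htj
        simp only [Finset.mem_Icc] at hti htj
        have hEE : E (i + 1) ≤ E j := EP_mono d T (by omega)
        omega
      have hdisj : (↑(Finset.range m) : Set ℕ).PairwiseDisjoint J := by
        intro i hi j hj hne
        rcases lt_or_gt_of_ne hne with h | h
        · exact key h (by simpa using hj)
        · exact (key h (by simpa using hi)).symm
      have h3 : ∑ i ∈ Finset.range m, ∑ t ∈ J i, d t
          = ∑ t ∈ (Finset.range m).biUnion J, d t := (Finset.sum_biUnion hdisj).symm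
      have h4 : (Finset.range m).biUnion J ⊆ Finset.Icc 2 T := by
        intro t ht
        rw [Finset.mem_biUnion] at ht
        obtain ⟨i, hi, hti⟩ := ht
        have hi' := Finset.mem_range.mp hi
        rw [hJ] at hti
        simp only [Finset.mem_Icc] at hti
        rw [Finset.mem_Icc]
        have := hEltT i hi'
        omega
      have h5 := Finset.sum_le_sum_of_subset_of_nonneg h4 (fun t _ _ => hd t)
      rw [h3] at h2
      exact le_trans h2 h5
    -- CS1 : m^2 ≤ A * B
    have hCS1 : (m:ℝ)^2 ≤ A * B := by
      have cs := Finset.sum_mul_sq_le_sq_mul_sq (Finset.range m)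
        (fun i => Real.sqrt (Real.sqrt (1 / c i))) (fun i => Real.sqrt (Real.sqrt (c i)))
      have hfg : ∀ i ∈ Finset.range m,
          Real.sqrt (Real.sqrt (1 / c i)) * Real.sqrt (Real.sqrt (c i)) = 1 := by
        intro i hi
        have hp := hcpos i (Finset.mem_range.mp hi)
        rw [← Real.sqrt_mul (Real.sqrt_nonneg _), ← Real.sqrt_mul (by positivity),
          one_div, inv_mul_cancel₀ (ne_of_gt hp), Real.sqrt_one, Real.sqrt_one]
      have hf2 : ∀ i ∈ Finset.range m,
          Real.sqrt (Real.sqrt (1 / c i)) ^ 2 = Real.sqrt (1 / c i) :=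
        fun i _ => Real.sq_sqrt (Real.sqrt_nonneg _)
      have hg2 : ∀ i ∈ Finset.range m,
          Real.sqrt (Real.sqrt (c i)) ^ 2 = Real.sqrt (c i) :=
        fun i _ => Real.sq_sqrt (Real.sqrt_nonneg _)
      rw [Finset.sum_congr rfl hfg, Finset.sum_congr rfl hf2, Finset.sum_congr rfl hg2] at cs
      simp only [Finset.sum_const, Finset.card_range, nsmul_eq_mul, mul_one] at cs
      exact cs
    -- CS2 : B^2 ≤ m * (2T)
    have hCS2 : B^2 ≤ (m:ℝ) * (2 * T) := by
      have cs := Finset.sum_mul_sq_le_sq_mul_sq (Finset.range m)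
        (fun _ => (1:ℝ)) (fun i => Real.sqrt (c i))
      simp only [one_mul, one_pow] at cs
      have hsq : ∀ i ∈ Finset.range m, Real.sqrt (c i) ^ 2 = c i :=
        fun i hi => Real.sq_sqrt (hcpos i (Finset.mem_range.mp hi)).le
      rw [Finset.sum_congr rfl hsq] at cs
      have hCsum : ∑ i ∈ Finset.range m, c i = (E m : ℝ) + m := by
        have hceq : ∀ i ∈ Finset.range m, c i = ((E (i + 1) : ℝ) - E i) + 1 := by
          intro i _
          simp only [hc]; ring
        rw [Finset.sum_congr rfl hceq, Finset.sum_add_distrib,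
          Finset.sum_range_sub (fun i => (E i : ℝ))]
        simp [hE0]
      have hET : (E m : ℝ) ≤ T := by exact_mod_cast EP_le d T m
      have hmled : (m : ℝ) ≤ T := by exact_mod_cast hmT.le
      have hcs' : B ^ 2 ≤ (m:ℝ) * ((E m : ℝ) + m) := by
        rw [← hCsum]
        simpa using cs
      have : (m:ℝ) * ((E m : ℝ) + m) ≤ (m:ℝ) * (2 * T) := by
        apply mul_le_mul_of_nonneg_left _ (Nat.cast_nonneg m)
        linarith
      linarith
    have hm3 : (m:ℝ)^3 ≤ 2 * T * V^2 := by
      have hmpos : (0:ℝ) < m := by exact_mod_cast hm1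
      have e2 : ((m:ℝ)^2)^2 ≤ (A*B)^2 := pow_le_pow_left₀ (sq_nonneg _) hCS1 2
      have e4 : A^2 ≤ V^2 := pow_le_pow_left₀ hA0 hAV 2
      have e5 : A^2*B^2 ≤ V^2*((m:ℝ)*(2*T)) :=
        mul_le_mul e4 hCS2 (sq_nonneg B) (by positivity)
      have h4 : (m:ℝ)^4 ≤ (2 * T * V^2) * m := by nlinarith
      have := le_of_mul_le_mul_right (by nlinarith : (m:ℝ)^3 * m ≤ (2 * T * V^2) * m) hmpos
      linarith
    have hfin : (m:ℝ) ≤ 2 * V ^ ((2:ℝ)/3) * (T:ℝ) ^ ((1:ℝ)/3) := by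
      have hmnn : (0:ℝ) ≤ m := Nat.cast_nonneg m
      have h1 : (m:ℝ) = ((m:ℝ)^3) ^ ((1:ℝ)/3) := by
        rw [← Real.rpow_natCast (m:ℝ) 3, ← Real.rpow_mul hmnn]
        norm_num
      have h2 : ((m:ℝ)^3) ^ ((1:ℝ)/3) ≤ (2 * T * V^2) ^ ((1:ℝ)/3) :=
        Real.rpow_le_rpow (by positivity) hm3 (by norm_num)
      have h3 : (2 * (T:ℝ) * V^2) ^ ((1:ℝ)/3)
          = (2:ℝ) ^ ((1:ℝ)/3) * (T:ℝ) ^ ((1:ℝ)/3) * V ^ ((2:ℝ)/3) := by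
        rw [Real.mul_rpow (by positivity) (by positivity),
            Real.mul_rpow (by norm_num) (Nat.cast_nonneg T)]
        congr 1
        rw [← Real.rpow_natCast V 2, ← Real.rpow_mul hV0]
        norm_num
      have h4 : (2:ℝ) ^ ((1:ℝ)/3) ≤ 2 := by
        calc (2:ℝ) ^ ((1:ℝ)/3) ≤ (2:ℝ) ^ (1:ℝ) :=
              Real.rpow_le_rpow_of_exponent_le one_le_two (by norm_num)
          _ = 2 := Real.rpow_one 2
      have h5 : (2:ℝ) ^ ((1:ℝ)/3) * (T:ℝ) ^ ((1:ℝ)/3) * V ^ ((2:ℝ)/3)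
          ≤ 2 * V ^ ((2:ℝ)/3) * (T:ℝ) ^ ((1:ℝ)/3) := by
        have hTn : (0:ℝ) ≤ (T:ℝ) ^ ((1:ℝ)/3) := Real.rpow_nonneg (Nat.cast_nonneg T) _
        have hVn : (0:ℝ) ≤ V ^ ((2:ℝ)/3) := Real.rpow_nonneg hV0 _
        have h6 : (2:ℝ) ^ ((1:ℝ)/3) * (T:ℝ) ^ ((1:ℝ)/3) ≤ 2 * (T:ℝ) ^ ((1:ℝ)/3) :=
          mul_le_mul_of_nonneg_right h4 hTn
        have h7 := mul_le_mul_of_nonneg_right h6 hVn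
        nlinarith
      calc (m:ℝ) = ((m:ℝ)^3) ^ ((1:ℝ)/3) := h1
        _ ≤ (2 * T * V^2) ^ ((1:ℝ)/3) := h2
        _ = (2:ℝ) ^ ((1:ℝ)/3) * (T:ℝ) ^ ((1:ℝ)/3) * V ^ ((2:ℝ)/3) := h3
        _ ≤ 2 * V ^ ((2:ℝ)/3) * (T:ℝ) ^ ((1:ℝ)/3) := h5
    rw [hKm]
    push_cast
    linarith


lemma tvDist_nonneg' (μ ν : Measure ℝ) : 0 ≤ tvDist μ ν :=
  Real.iSup_nonneg fun A => abs_nonneg _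

end Stmt16Aux

/-- Partition lemma: for probability distributions `μ 1, …, μ T` with total variation
budget `V = Σ_{t=2}^T ‖μ_t − μ_{t−1}‖_TV`, the horizon `{1,…,T}` can be partitioned into
`K` consecutive intervals `I'_k = [e_{k−1}+1, e_k]` such that every interval has
within-interval variation at most `√(1/|I'_k|)` and `K ≤ 2·V^{2/3}·T^{1/3} + 1`. -/
theorem stmt_16
    (T : ℕ) (hT : 1 ≤ T)
    (μ : ℕ → Measure ℝ) (hprob : ∀ t, IsProbabilityMeasure (μ t))
    (V : ℝ)
    (hV : V = ∑ t ∈ Finset.Icc 2 T, tvDist (μ t) (μ (t - 1))) :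
    ∃ (K : ℕ) (e : ℕ → ℕ),
      1 ≤ K ∧ e 0 = 0 ∧ e K = T ∧
      (∀ k < K, e k < e (k + 1)) ∧
      (∀ k, 1 ≤ k → k ≤ K →
        (∑ t ∈ Finset.Icc (e (k - 1) + 2) (e k), tvDist (μ t) (μ (t - 1)))
          ≤ Real.sqrt (1 / ((e k : ℝ) - e (k - 1)))) ∧
      (K : ℝ) ≤ 2 * V ^ ((2 : ℝ) / 3) * (T : ℝ) ^ ((1 : ℝ) / 3) + 1 := by
  subst hV
  exact Stmt16Aux.partition T hT (fun t => tvDist (μ t) (μ (t - 1)))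
    (fun t => Stmt16Aux.tvDist_nonneg' _ _)

end
end

section
/- Stieltjes perturbation bound: let h: ℝ → ℝ be L_h-Lipschitz, let a < b be real numbers, and let μ_1 and μ_2 be Borel probability measures on ℝ, both supported in [a,b], whose cumulative distribution functions G_1 and G_2 satisfy sup_{y∈ℝ} |G_1(y) − G_2(y)| ≤ ε for some ε > 0. Then |∫ h dμ_1 − ∫ h dμ_2| ≤ (b−a)·L_h·ε. -/
/-!
Summation by parts turns the Riemann–Stieltjes sum of `h` against the CDF `G` of `μ` on a grid
`a = t₀ ≤ ⋯ ≤ tₙ = b` into `h b - ∑ₖ (h tₖ₊₁ - h tₖ) G tₖ`. Since `h` is `L`-Lipschitz, this sum is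
within `L δ` of `∫ h dμ` when the mesh is `δ`; and it depends linearly on `G`, so replacing `G₁`
by `G₂` (which agree at `b`) moves it by at most `∑ₖ L (tₖ₊₁ - tₖ) ε = L (b - a) ε`. Let `δ → 0`.
-/

open MeasureTheory Set Finset Filter
open scoped NNReal

/-- Summation by parts of `h (t 0) * F (t 0) + ∑ₖ h (t (k + 1)) * (F (t (k + 1)) - F (t k))`, the
Riemann–Stieltjes sum of `h` against `F` on the grid `t`. -/
noncomputable def stieltjesSum (h F : ℝ → ℝ) (t : ℕ → ℝ) (n : ℕ) : ℝ :=
  h (t n) * F (t n) - ∑ k ∈ range n, (h (t (k + 1)) - h (t k)) * F (t k)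

lemma stieltjesSum_succ (h F : ℝ → ℝ) (t : ℕ → ℝ) (n : ℕ) :
    stieltjesSum h F t (n + 1)
      = stieltjesSum h F t n + h (t (n + 1)) * (F (t (n + 1)) - F (t n)) := by
  simp only [stieltjesSum, sum_range_succ]
  ring

lemma stieltjesSum_sub (h F₁ F₂ : ℝ → ℝ) (t : ℕ → ℝ) (n : ℕ) :
    stieltjesSum h F₁ t n - stieltjesSum h F₂ t n = stieltjesSum h (F₁ - F₂) t n := by
  simp only [stieltjesSum, Pi.sub_apply, mul_sub, sum_sub_distrib]
  ring

lemma abs_stieltjesSum_le {h F : ℝ → ℝ} {K : ℝ≥0} {t : ℕ → ℝ} {n : ℕ} {ε : ℝ}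
    (hh : LipschitzWith K h) (ht : Monotone t) (hF : ∀ y, |F y| ≤ ε) (hFn : F (t n) = 0) :
    |stieltjesSum h F t n| ≤ K * (t n - t 0) * ε := by
  have hterm : ∀ k, |(h (t (k + 1)) - h (t k)) * F (t k)| ≤ K * (t (k + 1) - t k) * ε := by
    intro k
    have hΔh : |h (t (k + 1)) - h (t k)| ≤ K * (t (k + 1) - t k) := by
      simpa [Real.dist_eq, abs_of_nonneg (sub_nonneg.2 (ht k.le_succ))] using
        hh.dist_le_mul (t (k + 1)) (t k)
    rw [abs_mul]
    exact mul_le_mul hΔh (hF _) (abs_nonneg _) (by have := ht k.le_succ; positivity)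
  calc |stieltjesSum h F t n|
      = |∑ k ∈ range n, (h (t (k + 1)) - h (t k)) * F (t k)| := by
        rw [stieltjesSum, hFn, mul_zero, zero_sub, abs_neg]
    _ ≤ ∑ k ∈ range n, K * (t (k + 1) - t k) * ε :=
        (abs_sum_le_sum_abs _ _).trans (sum_le_sum fun k _ => hterm k)
    _ = K * (t n - t 0) * ε := by
        rw [← sum_mul, ← mul_sum, sum_range_sub t]

section Measure

variable {μ μ₁ μ₂ : Measure ℝ} {h : ℝ → ℝ} {K : ℝ≥0}

lemma abs_setIntegral_Ioc_sub_le [IsFiniteMeasure μ] (hh : LipschitzWith K h) (x y : ℝ) :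
    |∫ z in Ioc x y, h z ∂μ - h y * μ.real (Ioc x y)| ≤ K * (y - x) * μ.real (Ioc x y) := by
  have hint : IntegrableOn h (Ioc x y) μ := hh.continuous.integrableOn_Ioc
  have hconst : h y * μ.real (Ioc x y) = ∫ _ in Ioc x y, h y ∂μ := by
    rw [setIntegral_const, smul_eq_mul, mul_comm]
  rw [hconst, ← integral_sub hint (integrable_const _), ← Real.norm_eq_abs]
  refine norm_setIntegral_le_of_norm_le_const (measure_lt_top μ _) fun z hz => ?_
  calc ‖h z - h y‖ = dist (h z) (h y) := (dist_eq_norm _ _).symm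
    _ ≤ K * dist z y := hh.dist_le_mul z y
    _ ≤ K * (y - x) := by
        gcongr
        rw [Real.dist_eq, abs_of_nonpos (by linarith [hz.2])]
        linarith [hz.1]

lemma setIntegral_Iic_of_measure_Iio_eq_zero {c : ℝ} (hc : μ (Iio c) = 0) :
    ∫ y in Iic c, h y ∂μ = h c * μ.real (Iic c) := by
  have hconst : ∀ᵐ y ∂μ.restrict (Iic c), h y = h c := by
    filter_upwards [ae_restrict_mem measurableSet_Iic,
      ae_restrict_of_ae (measure_eq_zero_iff_ae_notMem.1 hc)] with y (hyc : y ≤ c) (hcy : ¬y < c)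
    rw [le_antisymm hyc (not_lt.1 hcy)]
  rw [integral_congr_ae hconst, setIntegral_const, smul_eq_mul, mul_comm]

lemma integrableOn_Iic_of_measure_Iio_eq_zero [IsFiniteMeasure μ] (hh : Continuous h) {c : ℝ}
    (hc : μ (Iio c) = 0) (x : ℝ) : IntegrableOn h (Iic x) μ :=
  ((IntegrableOn.of_measure_zero hc).union hh.integrableOn_Icc).mono_set fun y hy =>
    (lt_or_ge y c).imp id fun hcy => ⟨hcy, hy⟩

lemma measureReal_Iic_add_measureReal_Ioc [IsFiniteMeasure μ] {x y : ℝ} (hxy : x ≤ y) :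
    μ.real (Iic x) + μ.real (Ioc x y) = μ.real (Iic y) := by
  rw [← measureReal_union (Iic_disjoint_Ioc le_rfl) measurableSet_Ioc, Iic_union_Ioc_eq_Iic hxy]

lemma abs_setIntegral_Iic_sub_stieltjesSum_le [IsFiniteMeasure μ] (hh : LipschitzWith K h)
    {t : ℕ → ℝ} (ht : Monotone t) {δ : ℝ} (hδ : ∀ k, t (k + 1) - t k ≤ δ)
    (h0 : μ (Iio (t 0)) = 0) (n : ℕ) :
    |∫ y in Iic (t n), h y ∂μ - stieltjesSum h (fun y => μ.real (Iic y)) t n|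
      ≤ K * δ * μ.real (Iic (t n)) := by
  induction n with
  | zero =>
    have hδ0 : 0 ≤ δ := (sub_nonneg.2 (ht (Nat.zero_le 1))).trans (hδ 0)
    simp only [stieltjesSum, range_zero, sum_empty, sub_zero,
      setIntegral_Iic_of_measure_Iio_eq_zero h0, sub_self, abs_zero]
    positivity
  | succ n ih =>
    have hle : t n ≤ t (n + 1) := ht n.le_succ
    have hint := integrableOn_Iic_of_measure_Iio_eq_zero hh.continuous h0
    have hcell := abs_setIntegral_Ioc_sub_le (μ := μ) hh (t n) (t (n + 1))
    have hmesh : K * (t (n + 1) - t n) * μ.real (Ioc (t n) (t (n + 1)))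
        ≤ K * δ * μ.real (Ioc (t n) (t (n + 1))) := by
      gcongr
      exact hδ n
    rw [← Iic_union_Ioc_eq_Iic hle, setIntegral_union (Iic_disjoint_Ioc le_rfl) measurableSet_Ioc
      (hint _) hh.continuous.integrableOn_Ioc, Iic_union_Ioc_eq_Iic hle, stieltjesSum_succ,
      ← measureReal_Iic_add_measureReal_Ioc hle, add_sub_cancel_left, add_sub_add_comm, mul_add]
    exact (abs_add_le _ _).trans (add_le_add ih (hcell.trans hmesh))

lemma measure_Iic_eq_one_of_measure_Icc_eq_one [IsProbabilityMeasure μ] {a b : ℝ}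
    (hμ : μ (Icc a b) = 1) : μ (Iic b) = 1 :=
  le_antisymm prob_le_one (hμ ▸ measure_mono Icc_subset_Iic_self)

lemma abs_integral_sub_stieltjesSum_le [IsProbabilityMeasure μ] (hh : LipschitzWith K h)
    {t : ℕ → ℝ} (ht : Monotone t) {δ : ℝ} (hδ : ∀ k, t (k + 1) - t k ≤ δ) {n : ℕ}
    (hμ : μ (Icc (t 0) (t n)) = 1) :
    |∫ y, h y ∂μ - stieltjesSum h (fun y => μ.real (Iic y)) t n| ≤ K * δ := by
  have hae : ∀ᵐ y ∂μ, y ∈ Icc (t 0) (t n) :=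
    mem_ae_iff.2 ((prob_compl_eq_zero_iff measurableSet_Icc).2 hμ)
  have h0 : μ (Iio (t 0)) = 0 :=
    measure_eq_zero_iff_ae_notMem.2 (hae.mono fun y hy => not_lt.2 hy.1)
  have hIic : μ.restrict (Iic (t n)) = μ :=
    Measure.restrict_eq_self_of_ae_mem (hae.mono fun y hy => hy.2)
  have hG : μ.real (Iic (t n)) = 1 := by
    simp [measureReal_def, measure_Iic_eq_one_of_measure_Icc_eq_one hμ]
  simpa [hIic, hG] using abs_setIntegral_Iic_sub_stieltjesSum_le hh ht hδ h0 n

lemma abs_integral_sub_integral_le_of_cdf [IsProbabilityMeasure μ₁] [IsProbabilityMeasure μ₂]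
    (hh : LipschitzWith K h) {t : ℕ → ℝ} (ht : Monotone t) {δ : ℝ} (hδ : ∀ k, t (k + 1) - t k ≤ δ)
    {n : ℕ} (hμ₁ : μ₁ (Icc (t 0) (t n)) = 1) (hμ₂ : μ₂ (Icc (t 0) (t n)) = 1) {ε : ℝ}
    (hcdf : ∀ y, |μ₁.real (Iic y) - μ₂.real (Iic y)| ≤ ε) :
    |∫ y, h y ∂μ₁ - ∫ y, h y ∂μ₂| ≤ K * (t n - t 0) * ε + 2 * (K * δ) := by
  set G₁ : ℝ → ℝ := fun y => μ₁.real (Iic y)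
  set G₂ : ℝ → ℝ := fun y => μ₂.real (Iic y)
  have happrox₁ : |∫ y, h y ∂μ₁ - stieltjesSum h G₁ t n| ≤ K * δ :=
    abs_integral_sub_stieltjesSum_le hh ht hδ hμ₁
  have happrox₂ : |∫ y, h y ∂μ₂ - stieltjesSum h G₂ t n| ≤ K * δ :=
    abs_integral_sub_stieltjesSum_le hh ht hδ hμ₂
  have hGn : (G₁ - G₂) (t n) = 0 := by
    simp [G₁, G₂, measureReal_def, measure_Iic_eq_one_of_measure_Icc_eq_one hμ₁,
      measure_Iic_eq_one_of_measure_Icc_eq_one hμ₂]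
  have hsum := abs_stieltjesSum_le (F := G₁ - G₂) hh ht hcdf hGn
  rw [← stieltjesSum_sub] at hsum
  have htri₁ := abs_sub_le (∫ y, h y ∂μ₁) (stieltjesSum h G₁ t n) (∫ y, h y ∂μ₂)
  have htri₂ := abs_sub_le (stieltjesSum h G₁ t n) (stieltjesSum h G₂ t n) (∫ y, h y ∂μ₂)
  rw [abs_sub_comm (stieltjesSum h G₂ t n)] at htri₂
  linarith

end Measure

theorem stmt_17_general
    (h : ℝ → ℝ) (Lh : ℝ)
    (hLip : ∀ y y' : ℝ, |h y - h y'| ≤ Lh * |y - y'|)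
    (a b : ℝ) (hab : a < b)
    (μ₁ μ₂ : Measure ℝ) [IsProbabilityMeasure μ₁] [IsProbabilityMeasure μ₂]
    (hsupp₁ : μ₁ (Set.Icc a b) = 1) (hsupp₂ : μ₂ (Set.Icc a b) = 1)
    (ε : ℝ)
    (hcdf : ∀ y : ℝ, |(μ₁ (Set.Iic y)).toReal - (μ₂ (Set.Iic y)).toReal| ≤ ε) :
    |(∫ y, h y ∂μ₁) - ∫ y, h y ∂μ₂| ≤ (b - a) * Lh * ε := by
  have hLh : 0 ≤ Lh :=
    nonneg_of_mul_nonneg_left ((abs_nonneg _).trans (hLip a b)) (abs_pos.2 (sub_ne_zero.2 hab.ne))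
  have hh : LipschitzWith Lh.toNNReal h :=
    LipschitzWith.of_dist_le_mul fun y y' => by simpa [Real.dist_eq, hLh] using hLip y y'
  have hmesh : ∀ n : ℕ, 0 < n →
      |(∫ y, h y ∂μ₁) - ∫ y, h y ∂μ₂| ≤ (b - a) * Lh * ε + 2 * (Lh * ((b - a) / n)) := by
    intro n hn
    set t : ℕ → ℝ := fun k => a + k * ((b - a) / n)
    have ht0 : t 0 = a := by simp [t]
    have htn : t n = b := by simp [t]; field_simp; ring
    have ht : Monotone t := fun i j hij => by
      simp only [t]
      gcongr
    have hδ : ∀ k, t (k + 1) - t k ≤ (b - a) / n := fun k => by simp only [t]; push_cast; linarith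
    have := abs_integral_sub_integral_le_of_cdf hh ht hδ (ht0 ▸ htn ▸ hsupp₁)
      (ht0 ▸ htn ▸ hsupp₂) hcdf
    rwa [ht0, htn, Real.coe_toNNReal _ hLh, mul_comm Lh] at this
  refine ge_of_tendsto ?_ (eventually_atTop.2 ⟨1, hmesh⟩)
  simpa using tendsto_const_nhds.add
    (((tendsto_const_div_atTop_nhds_zero_nat (b - a)).const_mul Lh).const_mul 2)

/-- Stieltjes perturbation bound (Lemma 6): if `h` is `L_h`-Lipschitz, `μ₁, μ₂` are Borel
probability measures supported in `[a,b]` whose CDFs are uniformly within `ε`, then the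
integrals of `h` against the two measures differ by at most `(b−a)·L_h·ε`. -/
theorem stmt_17
    (h : ℝ → ℝ) (Lh : ℝ)
    (hLip : ∀ y y' : ℝ, |h y - h y'| ≤ Lh * |y - y'|)
    (a b : ℝ) (hab : a < b)
    (μ₁ μ₂ : Measure ℝ) [IsProbabilityMeasure μ₁] [IsProbabilityMeasure μ₂]
    (hsupp₁ : μ₁ (Set.Icc a b) = 1) (hsupp₂ : μ₂ (Set.Icc a b) = 1)
    (ε : ℝ) (hε : 0 < ε)
    (hcdf : ∀ y : ℝ, |(μ₁ (Set.Iic y)).toReal - (μ₂ (Set.Iic y)).toReal| ≤ ε) :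
    |(∫ y, h y ∂μ₁) - ∫ y, h y ∂μ₂| ≤ (b - a) * Lh * ε :=
  stmt_17_general h Lh hLip a b hab μ₁ μ₂ hsupp₁ hsupp₂ ε hcdf
end
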